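/- Let X be a real normed vector space, E : X → ℝ continuous, u₀, u₁ ∈ X, and r > 0 such that inf_{‖u-u₀‖=r} E(u) ≥ E(u₀), ‖u₁ - u₀‖ > r, and E(u₁) ≤ E(u₀). Let Γ be the set of continuous paths g : [0,1] → X with g(0) = u₀ and g(1) = u₁, and let c = inf_{g ∈ Γ} sup_{t ∈ [0,1]} E(g(t)). Then c ≥ E(u₀), and there exists a closed set F ⊆ X such that u₀ and u₁ lie in two distinct connected components of the complement of F ∩ {u ∈ X : E(u) ≥ c} (i.e., F ∩ {E ≥ c} separates u₀ and u₁). -/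

import Mathlib

/-!
Every path from `u₀` to `u₁` crosses the sphere `‖u - u₀‖ = r`, on which `E ≥ E(u₀)`, so
`c ≥ E(u₀)`. If `c = E(u₀)`, the whole sphere lies in `{E ≥ c}` and separates `u₀` from `u₁`
by the intermediate value theorem, so `F` can be the sphere. If `c > E(u₀) ≥ E(u₁)`, take
`F = X`: a component of the open set `{E < c}` containing both points would be path
connected, and a path inside it would have maximum `< c`.
-/

open Set

section

variable {X : Type*} [TopologicalSpace X]

theorem connectedComponentIn_compl_ne_of_preimage_subset {f : X → ℝ} (hf : Continuous f)
    {S : Set X} {r : ℝ} (hS : f ⁻¹' {r} ⊆ S) {a b : X} (ha : f a ≤ r) (hb : r ≤ f b)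
    (haS : a ∉ S) (hbS : b ∉ S) : connectedComponentIn Sᶜ a ≠ connectedComponentIn Sᶜ b := by
  intro hab
  have hb' : b ∈ connectedComponentIn Sᶜ a := hab ▸ mem_connectedComponentIn hbS
  obtain ⟨x, hx, hxr⟩ := isPreconnected_connectedComponentIn.intermediate_value
    (mem_connectedComponentIn haS) hb' hf.continuousOn ⟨ha, hb⟩
  exact connectedComponentIn_subset _ _ hx (hS hxr)

theorem IsOpen.joinedIn_of_mem_connectedComponentIn [LocallyPathConnectedSpace X] {U : Set X}
    (hU : IsOpen U) {x y : X} (hx : x ∈ U) (hy : y ∈ connectedComponentIn U x) :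
    JoinedIn U x y := by
  have hpc : IsPathConnected (connectedComponentIn U x) :=
    hU.connectedComponentIn.isConnected_iff_isPathConnected.mp
      (isConnected_connectedComponentIn_iff.mpr hx)
  exact (hpc.joinedIn x (mem_connectedComponentIn hx) y hy).mono (connectedComponentIn_subset _ _)

def pathMaxima (E : X → ℝ) (u₀ u₁ : X) : Set ℝ :=
  { y : ℝ | ∃ g : ℝ → X, ContinuousOn g (Icc 0 1) ∧ g 0 = u₀ ∧ g 1 = u₁ ∧
      y = sSup ((fun t => E (g t)) '' Icc 0 1) }

theorem Path.sSup_mem_pathMaxima (E : X → ℝ) {u₀ u₁ : X} (γ : Path u₀ u₁) :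
    sSup ((fun t => E (γ.extend t)) '' Icc 0 1) ∈ pathMaxima E u₀ u₁ :=
  ⟨γ.extend, γ.continuous_extend.continuousOn, by simp, by simp, rfl⟩

theorem pathMaxima_nonempty [PathConnectedSpace X] (E : X → ℝ) (u₀ u₁ : X) :
    (pathMaxima E u₀ u₁).Nonempty :=
  ⟨_, (PathConnectedSpace.somePath u₀ u₁).sSup_mem_pathMaxima E⟩

theorem Path.exists_csInf_pathMaxima_le {E : X → ℝ} (hE : Continuous E) {u₀ u₁ : X}
    (hbdd : BddBelow (pathMaxima E u₀ u₁)) (γ : Path u₀ u₁) :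
    ∃ t, sInf (pathMaxima E u₀ u₁) ≤ E (γ t) := by
  have hcpt : IsCompact ((fun t => E (γ.extend t)) '' Icc 0 1) :=
    isCompact_Icc.image (hE.comp γ.continuous_extend)
  obtain ⟨t, ht, hmax⟩ := hcpt.sSup_mem ((nonempty_Icc.mpr zero_le_one).image _)
  refine ⟨⟨t, ht⟩, ?_⟩
  calc sInf (pathMaxima E u₀ u₁) ≤ sSup ((fun t => E (γ.extend t)) '' Icc 0 1) :=
        csInf_le hbdd (γ.sSup_mem_pathMaxima E)
    _ = E (γ ⟨t, ht⟩) := by rw [← hmax]; exact congrArg E (γ.extend_apply ht)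

theorem connectedComponentIn_setOf_lt_csInf_pathMaxima_ne [LocallyPathConnectedSpace X]
    {E : X → ℝ} (hE : Continuous E) {u₀ u₁ : X} (hbdd : BddBelow (pathMaxima E u₀ u₁))
    (h₀ : E u₀ < sInf (pathMaxima E u₀ u₁)) (h₁ : E u₁ < sInf (pathMaxima E u₀ u₁)) :
    connectedComponentIn {u | E u < sInf (pathMaxima E u₀ u₁)} u₀ ≠
      connectedComponentIn {u | E u < sInf (pathMaxima E u₀ u₁)} u₁ := by
  intro h
  have hU : IsOpen {u | E u < sInf (pathMaxima E u₀ u₁)} := isOpen_lt hE continuous_const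
  obtain ⟨γ, hγ⟩ :=
    hU.joinedIn_of_mem_connectedComponentIn h₀ (by rw [h]; exact mem_connectedComponentIn h₁)
  obtain ⟨t, ht⟩ := γ.exists_csInf_pathMaxima_le hE hbdd
  exact (hγ t).not_ge ht

end

theorem le_of_mem_pathMaxima {X : Type*} [PseudoMetricSpace X] {E : X → ℝ} (hE : Continuous E)
    {u₀ u₁ : X} {r m : ℝ} (hr : 0 ≤ r) (hdist : r ≤ dist u₁ u₀)
    (hsphere : ∀ u ∈ Metric.sphere u₀ r, m ≤ E u) : ∀ y ∈ pathMaxima E u₀ u₁, m ≤ y := by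
  rintro y ⟨g, hg, hg0, hg1, rfl⟩
  obtain ⟨t, ht, htr⟩ : r ∈ (fun t => dist (g t) u₀) '' Icc 0 1 :=
    intermediate_value_Icc zero_le_one
      ((continuous_id.dist continuous_const).comp_continuousOn hg) (by simp [hg0, hg1, hr, hdist])
  have hbdd : BddAbove ((fun t => E (g t)) '' Icc 0 1) :=
    (isCompact_Icc.image_of_continuousOn (hE.comp_continuousOn hg)).bddAbove
  exact (hsphere _ htr).trans (le_csSup hbdd ⟨t, ht, rfl⟩)

/-- Under the (possibly degenerate) mountain-pass geometry
`inf_{‖u-u₀‖=r} E(u) ≥ E(u₀)`, `‖u₁-u₀‖ > r`, `E(u₁) ≤ E(u₀)`, the mountain-pass level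
`c` satisfies `c ≥ E(u₀)`, and there is a closed set `F` such that `F ∩ {E ≥ c}`
separates `u₀` and `u₁`: they lie in two distinct connected components of the
complement of `F ∩ {E ≥ c}`. -/
theorem stmt_4 {X : Type*} [NormedAddCommGroup X] [NormedSpace ℝ X]
    (E : X → ℝ) (hE : Continuous E) (u₀ u₁ : X) (r : ℝ) (hr : 0 < r)
    (hmountain : ∀ u : X, ‖u - u₀‖ = r → E u₀ ≤ E u)
    (hdist : r < ‖u₁ - u₀‖) (h01 : E u₁ ≤ E u₀)
    (c : ℝ)
    (hc : c = sInf { y : ℝ | ∃ g : ℝ → X, ContinuousOn g (Set.Icc 0 1) ∧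
        g 0 = u₀ ∧ g 1 = u₁ ∧ y = sSup ((fun t => E (g t)) '' Set.Icc 0 1) }) :
    E u₀ ≤ c ∧
      ∃ F : Set X, IsClosed F ∧
        u₀ ∈ (F ∩ {u : X | c ≤ E u})ᶜ ∧
        u₁ ∈ (F ∩ {u : X | c ≤ E u})ᶜ ∧
        connectedComponentIn (F ∩ {u : X | c ≤ E u})ᶜ u₀ ≠
          connectedComponentIn (F ∩ {u : X | c ≤ E u})ᶜ u₁ := by
  change c = sInf (pathMaxima E u₀ u₁) at hc
  subst hc
  rw [← dist_eq_norm] at hdist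
  have hsphere : ∀ u ∈ Metric.sphere u₀ r, E u₀ ≤ E u :=
    fun u hu => hmountain u (mem_sphere_iff_norm.mp hu)
  have hlb : ∀ y ∈ pathMaxima E u₀ u₁, E u₀ ≤ y := le_of_mem_pathMaxima hE hr.le hdist.le hsphere
  have hEc : E u₀ ≤ sInf (pathMaxima E u₀ u₁) := le_csInf (pathMaxima_nonempty E u₀ u₁) hlb
  have hu₀ : u₀ ∉ Metric.sphere u₀ r := by simp [hr.ne]
  have hu₁ : u₁ ∉ Metric.sphere u₀ r := hdist.ne'
  refine ⟨hEc, ?_⟩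
  rcases hEc.eq_or_lt with heq | hlt
  · refine ⟨Metric.sphere u₀ r, Metric.isClosed_sphere, fun h => hu₀ h.1, fun h => hu₁ h.1, ?_⟩
    exact connectedComponentIn_compl_ne_of_preimage_subset (f := (dist · u₀))
      (continuous_id.dist continuous_const)
      (fun u hu => mem_inter hu (heq.symm.trans_le (hsphere u hu))) (by simp [hr.le]) hdist.le
      (fun h => hu₀ h.1) (fun h => hu₁ h.1)
  · refine ⟨univ, isClosed_univ, ?_⟩
    simp only [univ_inter, compl_ofPred, not_le]
    exact ⟨hlt, h01.trans_lt hlt,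
      connectedComponentIn_setOf_lt_csInf_pathMaxima_ne hE ⟨E u₀, hlb⟩ hlt (h01.trans_lt hlt)⟩
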